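/- arXiv:2205.00647 — 4 statements merged into one kernel-verified Lean document; each statement's English description precedes it below -/
import Mathlib

section
/- Let z_1, ..., z_n ∈ R^d (n ≥ 2) satisfy z_1 + ... + z_n = 0 and ||z_1||² + ... + ||z_n||² = 1. Then max over pairs i,j of ||z_i - z_j||² ≥ 2/(n-1). -/
/-!
Summing over all ordered pairs, `∑ᵢ ∑ⱼ ‖zᵢ - zⱼ‖² = 2n ∑ᵢ ‖zᵢ‖² - 2 ‖∑ᵢ zᵢ‖² = 2n`. Only the
`n (n - 1)` off-diagonal terms are nonzero, so the largest of them is at least `2 / (n - 1)`.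
-/

open Finset

theorem sum_sum_norm_sub_sq {ι E : Type*} [Fintype ι] [NormedAddCommGroup E]
    [InnerProductSpace ℝ E] (z : ι → E) :
    ∑ i, ∑ j, ‖z i - z j‖ ^ 2 = 2 * Fintype.card ι * ∑ i, ‖z i‖ ^ 2 - 2 * ‖∑ i, z i‖ ^ 2 := by
  have hrow (i : ι) : ∑ j, ‖z i - z j‖ ^ 2
      = Fintype.card ι * ‖z i‖ ^ 2 + ∑ j, ‖z j‖ ^ 2 - 2 * inner ℝ (z i) (∑ j, z j) := by
    simp only [norm_sub_sq_real, sum_sub_distrib, sum_add_distrib, inner_sum, mul_sum, sum_const,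
      card_univ, nsmul_eq_mul]
    ring
  simp only [hrow, sum_sub_distrib, sum_add_distrib, ← mul_sum, ← sum_inner, sum_const, card_univ,
    nsmul_eq_mul, real_inner_self_eq_norm_sq]
  ring

theorem sum_sum_le_of_diag_eq_zero {ι : Type*} [Fintype ι] [DecidableEq ι] {f : ι → ι → ℝ} {M : ℝ}
    (hdiag : ∀ i, f i i = 0) (hle : ∀ i j, f i j ≤ M) :
    ∑ i, ∑ j, f i j ≤ Fintype.card ι * (Fintype.card ι - 1) * M := by
  have hrow (i : ι) : ∑ j, f i j ≤ (Fintype.card ι - 1) * M := by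
    have : Nonempty ι := ⟨i⟩
    rw [← add_sum_erase _ _ (mem_univ i), hdiag, zero_add]
    calc ∑ j ∈ univ.erase i, f i j ≤ #(univ.erase i) • M :=
        sum_le_card_nsmul _ _ _ fun j _ => hle i j
      _ = (Fintype.card ι - 1) * M := by
        rw [card_erase_of_mem (mem_univ i), nsmul_eq_mul, card_univ, Nat.cast_pred Fintype.card_pos]
  calc ∑ i, ∑ j, f i j ≤ ∑ _i : ι, (Fintype.card ι - 1) * M := sum_le_sum fun i _ => hrow i
    _ = _ := by rw [sum_const, card_univ, nsmul_eq_mul, mul_assoc]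

theorem stmt_2_general (n d : ℕ) (z : Fin n → EuclideanSpace ℝ (Fin d))
    (hsum : ∑ i, z i = 0) (hnorm : ∑ i, ‖z i‖ ^ 2 = 1) :
    ∃ i j : Fin n, ‖z i - z j‖ ^ 2 ≥ 2 / ((n : ℝ) - 1) := by
  have hpos : 0 < n := Nat.pos_of_ne_zero (by rintro rfl; simp at hnorm)
  have : NeZero n := ⟨hpos.ne'⟩
  obtain ⟨⟨i, j⟩, hmax⟩ := Finite.exists_max fun p : Fin n × Fin n => ‖z p.1 - z p.2‖ ^ 2
  have hbound := sum_sum_le_of_diag_eq_zero (f := fun i j => ‖z i - z j‖ ^ 2) (by simp)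
    fun i' j' => hmax (i', j')
  rw [sum_sum_norm_sub_sq, hsum, hnorm, norm_zero, Fintype.card_fin] at hbound
  have hM : 2 ≤ ((n : ℝ) - 1) * ‖z i - z j‖ ^ 2 := by
    have : (0 : ℝ) < n := by exact_mod_cast hpos
    nlinarith
  have hn1 : 0 < (n : ℝ) - 1 := pos_of_mul_pos_left (two_pos.trans_le hM) (sq_nonneg _)
  exact ⟨i, j, (div_le_iff₀' hn1).2 hM⟩

theorem stmt_2 (n d : ℕ) (hn : 2 ≤ n) (z : Fin n → EuclideanSpace ℝ (Fin d))
    (hsum : ∑ i, z i = 0) (hnorm : ∑ i, ‖z i‖ ^ 2 = 1) :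
    ∃ i j : Fin n, ‖z i - z j‖ ^ 2 ≥ 2 / ((n : ℝ) - 1) :=
  stmt_2_general n d z hsum hnorm
end

section
/- Let A ∈ R^{n×n} be doubly stochastic and let c_{ij} denote the (i,j)-entry of AᵀA. For X = [x_1,...,x_n]ᵀ ∈ R^{n×d}, define V(X) = Σ_{i=1}^n ||x_i − x̄||², where x̄ = (1/n)Σ_i x_i. Then V(AX) = V(X) − Σ_{i<j} c_{ij} ||x_i − x_j||². -/
/-!
Write `X ↦ AX` as `y i = ∑ j, A i j • x j`. Column sums one preserve `∑ i, x i`, so the mean term of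
`V(y) = ∑ ‖y i‖² - n⁻¹ ‖∑ y i‖²` is unchanged, while `∑ ‖y i‖² = ∑ c j k ⟪x j, x k⟫` with
`c = AᵀA`. The matrix `c` is symmetric with unit row sums, and for such `c` polarization gives
`∑ c j k ⟪x j, x k⟫ = ∑ ‖x i‖² - ½ ∑ c j k ‖x j - x k‖²`; the halved full sum is the sum over `j < k`.
-/

open Finset RealInnerProductSpace

section

variable {ι E : Type*} [Fintype ι] [NormedAddCommGroup E] [InnerProductSpace ℝ E]

theorem sum_norm_sub_smul_sum_sq (y : ι → E) :
    ∑ i, ‖y i - (Fintype.card ι : ℝ)⁻¹ • ∑ k, y k‖ ^ 2 =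
      ∑ i, ‖y i‖ ^ 2 - (Fintype.card ι : ℝ)⁻¹ * ‖∑ k, y k‖ ^ 2 := by
  set N : ℝ := (Fintype.card ι : ℝ) with hNdef
  set s := ∑ k, y k
  have hcross : ∑ i, ⟪y i, N⁻¹ • s⟫ = N⁻¹ * ‖s‖ ^ 2 := by
    rw [← sum_inner, real_inner_smul_right, real_inner_self_eq_norm_sq]
  have hconst : ∑ _i : ι, ‖N⁻¹ • s‖ ^ 2 = N⁻¹ * ‖s‖ ^ 2 := by
    rcases eq_or_ne N 0 with hN | hN
    · simp [hN]
    · rw [sum_const, card_univ, nsmul_eq_mul, ← hNdef, norm_smul, mul_pow, Real.norm_eq_abs,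
        sq_abs]
      field_simp
  simp_rw [norm_sub_sq_real, sum_add_distrib, sum_sub_distrib, ← mul_sum, hcross, hconst]
  ring

theorem norm_sum_smul_sq (a : ι → ℝ) (x : ι → E) :
    ‖∑ j, a j • x j‖ ^ 2 = ∑ j, ∑ k, a j * a k * ⟪x j, x k⟫ := by
  simp_rw [← real_inner_self_eq_norm_sq, sum_inner, inner_sum, real_inner_smul_left,
    real_inner_smul_right, mul_assoc]

theorem sum_sum_smul_eq_sum {A : Matrix ι ι ℝ} (hcol : ∀ j, ∑ i, A i j = 1) (x : ι → E) :
    ∑ i, ∑ j, A i j • x j = ∑ j, x j := by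
  rw [sum_comm]
  simp_rw [← sum_smul, hcol, one_smul]

theorem sum_norm_sum_smul_sq (A : Matrix ι ι ℝ) (x : ι → E) :
    ∑ i, ‖∑ j, A i j • x j‖ ^ 2 = ∑ j, ∑ k, (A.transpose * A) j k * ⟪x j, x k⟫ := by
  simp_rw [norm_sum_smul_sq, Matrix.mul_apply, Matrix.transpose_apply, sum_mul]
  rw [sum_comm]
  exact sum_congr rfl fun j _ => sum_comm

theorem sum_transpose_mul_self_apply {A : Matrix ι ι ℝ} (hrow : ∀ i, ∑ j, A i j = 1)
    (hcol : ∀ j, ∑ i, A i j = 1) (j : ι) : ∑ k, (A.transpose * A) j k = 1 := by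
  simp_rw [Matrix.mul_apply, Matrix.transpose_apply]
  rw [sum_comm]
  simp_rw [← mul_sum, hrow, mul_one, hcol]

theorem sum_sum_mul_norm_sub_sq {c : Matrix ι ι ℝ} (hsymm : c.IsSymm)
    (hrow : ∀ j, ∑ k, c j k = 1) (x : ι → E) :
    ∑ j, ∑ k, c j k * ‖x j - x k‖ ^ 2 = 2 * (∑ j, ‖x j‖ ^ 2 - ∑ j, ∑ k, c j k * ⟪x j, x k⟫) := by
  have hleft : ∑ j, ∑ k, c j k * ‖x j‖ ^ 2 = ∑ j, ‖x j‖ ^ 2 := by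
    simp_rw [← sum_mul, hrow, one_mul]
  have hright : ∑ j, ∑ k, c j k * ‖x k‖ ^ 2 = ∑ j, ∑ k, c j k * ‖x j‖ ^ 2 := by
    rw [sum_comm]
    simp_rw [hsymm.apply]
  simp_rw [norm_sub_sq_real, mul_add, mul_sub, sum_add_distrib, sum_sub_distrib, hright, hleft]
  simp_rw [← mul_assoc, mul_comm _ (2 : ℝ), mul_assoc, ← mul_sum]
  ring

end

theorem sum_sum_eq_two_mul_sum_sum_lt {ι : Type*} [Fintype ι] [LinearOrder ι] {g : ι → ι → ℝ}
    (hsymm : ∀ i j, g i j = g j i) (hdiag : ∀ i, g i i = 0) :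
    ∑ i, ∑ j, g i j = 2 * ∑ i, ∑ j ∈ univ.filter (fun j => i < j), g i j := by
  have hsplit : ∀ i j, g i j = (if i < j then g i j else 0) + if j < i then g i j else 0 := by
    intro i j
    rcases lt_trichotomy i j with h | rfl | h
    · simp [h, h.not_gt]
    · simp [hdiag]
    · simp [h, h.not_gt]
  have hlower : ∑ i, ∑ j, (if j < i then g i j else 0) = ∑ i, ∑ j, if i < j then g i j else 0 := by
    rw [sum_comm]
    simp_rw [hsymm]
  rw [sum_congr rfl fun i _ => sum_congr rfl fun j _ => hsplit i j]
  simp_rw [sum_filter, sum_add_distrib] at hlower ⊢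
  rw [hlower]
  ring

theorem stmt_3_general (n d : ℕ) (A : Matrix (Fin n) (Fin n) ℝ)
    (hrow : ∀ i, ∑ j, A i j = 1) (hcol : ∀ j, ∑ i, A i j = 1)
    (x : Fin n → EuclideanSpace ℝ (Fin d))
    (V : (Fin n → EuclideanSpace ℝ (Fin d)) → ℝ)
    (hV : ∀ y : Fin n → EuclideanSpace ℝ (Fin d),
      V y = ∑ i, ‖y i - (n : ℝ)⁻¹ • ∑ k, y k‖ ^ 2) :
    V (fun i => ∑ j, A i j • x j) =
      V x - ∑ i, ∑ j ∈ Finset.univ.filter (fun j => i < j),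
        (A.transpose * A) i j * ‖x i - x j‖ ^ 2 := by
  have hV' : ∀ y, V y = ∑ i, ‖y i‖ ^ 2 - (n : ℝ)⁻¹ * ‖∑ k, y k‖ ^ 2 := fun y => by
    simpa [← hV] using sum_norm_sub_smul_sum_sq y
  have hsymm := Matrix.isSymm_transpose_mul_self A
  have hpairs := sum_sum_mul_norm_sub_sq hsymm (sum_transpose_mul_self_apply hrow hcol) x
  rw [sum_sum_eq_two_mul_sum_sum_lt (fun i j => by rw [hsymm.apply, norm_sub_rev])
    (fun i => by simp)] at hpairs
  rw [hV', hV', sum_sum_smul_eq_sum hcol, sum_norm_sum_smul_sq]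
  linarith

theorem stmt_3 (n d : ℕ) (A : Matrix (Fin n) (Fin n) ℝ)
    (hpos : ∀ i j, 0 ≤ A i j)
    (hrow : ∀ i, ∑ j, A i j = 1) (hcol : ∀ j, ∑ i, A i j = 1)
    (x : Fin n → EuclideanSpace ℝ (Fin d))
    (V : (Fin n → EuclideanSpace ℝ (Fin d)) → ℝ)
    (hV : ∀ y : Fin n → EuclideanSpace ℝ (Fin d),
      V y = ∑ i, ‖y i - (n : ℝ)⁻¹ • ∑ k, y k‖ ^ 2) :
    V (fun i => ∑ j, A i j • x j) =
      V x - ∑ i, ∑ j ∈ Finset.univ.filter (fun j => i < j),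
        (A.transpose * A) i j * ‖x i - x j‖ ^ 2 :=
  stmt_3_general n d A hrow hcol x V hV
end

section
/- Let A ∈ R^{n×n} be doubly stochastic. Then AᵀA is symmetric, stochastic, and can be written as AᵀA = I − Σ_{i<j} c_{ij}(b_i − b_j)(b_i − b_j)ᵀ, where c_{ij} is the (i,j)-entry of AᵀA and b_i are the standard basis vectors of R^n. -/
/-!
`AᵀA` is a product of doubly stochastic matrices, hence doubly stochastic, and it is symmetric.
For a symmetric `M`, the term `M i j • (bᵢ - bⱼ)(bᵢ - bⱼ)ᵀ` splits as `g i j + g j i` with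
`g i j = M i j • bᵢ (bᵢ - bⱼ)ᵀ`, and `g i i = 0`. So the sum over `i < j` is the sum of `g` over
all pairs, which is `diagonal (row sums of M) - M`; when the row sums are `1` this is `1 - M`.
-/

open Finset Matrix

theorem Finset.sum_sum_lt_add_swap_add_sum_diag {ι β : Type*} [Fintype ι] [LinearOrder ι]
    [AddCommMonoid β] (g : ι → ι → β) :
    ∑ i, ∑ j ∈ univ.filter (fun j => i < j), (g i j + g j i) + ∑ i, g i i
      = ∑ i, ∑ j, g i j := by
  have hswap : ∑ i, ∑ j ∈ univ.filter (fun j => i < j), g j i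
      = ∑ i, ∑ j ∈ univ.filter (fun j => j < i), g i j := by
    simp only [sum_filter]
    exact sum_comm
  have htrichotomy (i : ι) : ∑ j ∈ univ.filter (fun j => i < j), g i j
      + ∑ j ∈ univ.filter (fun j => j < i), g i j + g i i = ∑ j, g i j := by
    rw [← Fintype.sum_ite_eq i (g i), sum_filter, sum_filter, ← sum_add_distrib,
      ← sum_add_distrib]
    refine sum_congr rfl fun j _ => ?_
    rcases lt_trichotomy i j with h | rfl | h
    · simp [h, h.ne, h.not_gt]
    · simp
    · simp [h, h.ne', h.not_gt]
  simp only [sum_add_distrib, hswap, ← htrichotomy]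

theorem Matrix.sum_sum_smul_vecMulVec_single_sub_single {n R : Type*} [Fintype n] [DecidableEq n]
    [CommRing R] (M : Matrix n n R) :
    ∑ i, ∑ j, M i j • vecMulVec (Pi.single i 1) (Pi.single i 1 - Pi.single j 1)
      = diagonal (fun i => ∑ j, M i j) - M := by
  ext p q
  simp only [Matrix.sum_apply, smul_apply, vecMulVec_apply, Pi.sub_apply, Pi.single_apply,
    sub_apply, diagonal_apply]
  split_ifs with h
  · subst h; simp [mul_sub, sum_sub_distrib]
  · simp [h, mul_sub]

theorem Matrix.IsSymm.sum_sum_lt_smul_vecMulVec_single_sub_single {n R : Type*} [Fintype n]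
    [LinearOrder n] [CommRing R] {M : Matrix n n R} (hM : M.IsSymm) :
    ∑ i, ∑ j ∈ univ.filter (fun j => i < j),
        M i j • vecMulVec (Pi.single i 1 - Pi.single j 1) (Pi.single i 1 - Pi.single j 1)
      = diagonal (fun i => ∑ j, M i j) - M := by
  have hsplit (i j : n) :
      M i j • vecMulVec (Pi.single i (1 : R) - Pi.single j 1) (Pi.single i 1 - Pi.single j 1)
        = M i j • vecMulVec (Pi.single i (1 : R)) (Pi.single i 1 - Pi.single j 1)
          + M j i • vecMulVec (Pi.single j (1 : R)) (Pi.single j 1 - Pi.single i 1) := by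
    rw [hM.apply i j, ← smul_add, sub_vecMulVec, sub_eq_add_neg, ← vecMulVec_neg, neg_sub]
  rw [← sum_sum_smul_vecMulVec_single_sub_single, ← sum_sum_lt_add_swap_add_sum_diag]
  simp only [hsplit, sub_self, vecMulVec_zero, smul_zero, sum_const_zero, add_zero]

theorem Matrix.IsSymm.eq_one_sub_sum_lt_smul_vecMulVec {n R : Type*} [Fintype n]
    [LinearOrder n] [CommRing R] {M : Matrix n n R} (hM : M.IsSymm)
    (hrow : ∀ i, ∑ j, M i j = 1) :
    M = 1 - ∑ i, ∑ j ∈ univ.filter (fun j => i < j),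
        M i j • vecMulVec (Pi.single i 1 - Pi.single j 1) (Pi.single i 1 - Pi.single j 1) := by
  rw [hM.sum_sum_lt_smul_vecMulVec_single_sub_single, funext hrow, diagonal_one, sub_sub_cancel]

theorem stmt_4 (n : ℕ) (A : Matrix (Fin n) (Fin n) ℝ)
    (hpos : ∀ i j, 0 ≤ A i j)
    (hrow : ∀ i, ∑ j, A i j = 1) (hcol : ∀ j, ∑ i, A i j = 1) :
    (A.transpose * A).IsSymm ∧
    (∀ i j, 0 ≤ (A.transpose * A) i j) ∧
    (∀ i, ∑ j, (A.transpose * A) i j = 1) ∧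
    A.transpose * A =
      1 - ∑ i, ∑ j ∈ Finset.univ.filter (fun j => i < j),
        (A.transpose * A) i j •
          Matrix.vecMulVec (Pi.single i 1 - Pi.single j 1)
            (Pi.single i 1 - Pi.single j 1) := by
  have hA : A ∈ doublyStochastic ℝ (Fin n) := mem_doublyStochastic_iff_sum.2 ⟨hpos, hrow, hcol⟩
  have hAtA : Aᵀ * A ∈ doublyStochastic ℝ (Fin n) :=
    mul_mem (transpose_mem_doublyStochastic_iff.2 hA) hA
  have hsymm := isSymm_transpose_mul_self A
  have hrowAtA := sum_row_of_mem_doublyStochastic hAtA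
  exact ⟨hsymm, fun i j => nonneg_of_mem_doublyStochastic hAtA, hrowAtA,
    hsymm.eq_one_sub_sum_lt_smul_vecMulVec hrowAtA⟩
end

section
/- Let G = ([n], E) be a connected graph, n ≥ 2, X = [x_1,...,x_n]ᵀ ∈ R^{n×d}, and V(X) = Σ_i ||x_i − x̄||² with x̄ the mean of the x_i. Let {i*, j*} ∈ E be an edge maximizing ||x_i − x_j|| over all edges. Then ||x_{i*} − x_{j*}||² ≥ (2 / ((n−1) · diam(G)²)) · V(X). -/
/-! Along a shortest path every edge has length at most `M = ‖x_{i*} - x_{j*}‖`, so all pairwise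
distances are at most `diam(G) · M`. On the other hand `∑_{i,j} ‖x_i - x_j‖² = 2n V(X)`, and the
left side has at most `n(n-1)` nonzero terms, whence `2 V(X) ≤ (n-1) diam(G)² M²`. -/

open Finset

namespace SimpleGraph

variable {V E : Type*} [SeminormedAddCommGroup E] {G : SimpleGraph V} {f : V → E} {M : ℝ}

theorem Walk.norm_sub_le_length_mul (h : ∀ u v, G.Adj u v → ‖f u - f v‖ ≤ M) :
    ∀ {u v : V} (p : G.Walk u v), ‖f u - f v‖ ≤ p.length * M
  | _, _, .nil => by simp
  | u, w, .cons (v := v) huv p => by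
    calc ‖f u - f w‖ ≤ ‖f u - f v‖ + ‖f v - f w‖ := norm_sub_le_norm_sub_add_norm_sub _ _ _
      _ ≤ M + p.length * M := add_le_add (h _ _ huv) (norm_sub_le_length_mul h p)
      _ = (p.cons huv).length * M := by rw [length_cons]; push_cast; ring

theorem norm_sub_le_diam_mul (hG : G.ediam ≠ ⊤) (hM : 0 ≤ M)
    (h : ∀ u v, G.Adj u v → ‖f u - f v‖ ≤ M) (u v : V) :
    ‖f u - f v‖ ≤ G.diam * M := by
  obtain ⟨p, hp⟩ := (preconnected_of_ediam_ne_top hG u v).exists_walk_length_eq_dist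
  calc ‖f u - f v‖ ≤ p.length * M := Walk.norm_sub_le_length_mul h p
    _ ≤ G.diam * M := by
      gcongr
      exact_mod_cast hp ▸ dist_le_diam hG

end SimpleGraph

theorem sum_norm_sub_sq_le_of_forall_le {ι E : Type*} [Fintype ι] [SeminormedAddCommGroup E]
    (x : ι → E) {B : ℝ} (h : ∀ i j, ‖x i - x j‖ ≤ B) (i : ι) :
    ∑ j, ‖x i - x j‖ ^ 2 ≤ (Fintype.card ι - 1) * B ^ 2 := by
  classical
  rw [← add_sum_erase _ _ (mem_univ i), sub_self, norm_zero, zero_pow two_ne_zero, zero_add]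
  calc ∑ j ∈ univ.erase i, ‖x i - x j‖ ^ 2 ≤ #(univ.erase i) • B ^ 2 :=
        sum_le_card_nsmul _ _ _ fun j _ => pow_le_pow_left₀ (norm_nonneg _) (h i j) 2
    _ = (Fintype.card ι - 1) * B ^ 2 := by
      rw [card_erase_of_mem (mem_univ i), card_univ, nsmul_eq_mul,
        Nat.cast_sub (Fintype.card_pos_iff.mpr ⟨i⟩), Nat.cast_one]

section Variance

variable {ι E : Type*} [Fintype ι] [NormedAddCommGroup E] [InnerProductSpace ℝ E]

theorem sum_sum_norm_sub_sq_eq (x : ι → E) (c : E) :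
    ∑ i, ∑ j, ‖x i - x j‖ ^ 2 =
      2 * Fintype.card ι * ∑ i, ‖x i - c‖ ^ 2 - 2 * ‖∑ i, (x i - c)‖ ^ 2 := by
  have hsplit : ∀ i j, ‖x i - x j‖ ^ 2 =
      ‖x i - c‖ ^ 2 - 2 * inner ℝ (x i - c) (x j - c) + ‖x j - c‖ ^ 2 := fun i j => by
    rw [← norm_sub_sq_real, sub_sub_sub_cancel_right]
  simp only [hsplit, sum_add_distrib, sum_sub_distrib, sum_const, card_univ, nsmul_eq_mul,
    ← mul_sum, ← inner_sum, ← sum_inner, real_inner_self_eq_norm_sq]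
  ring

theorem sum_sub_mean_eq_zero [Nonempty ι] (x : ι → E) :
    ∑ i, (x i - (Fintype.card ι : ℝ)⁻¹ • ∑ k, x k) = 0 := by
  rw [sum_sub_distrib, sum_const, card_univ, ← Nat.cast_smul_eq_nsmul ℝ, smul_smul,
    mul_inv_cancel₀ (Nat.cast_ne_zero.mpr Fintype.card_ne_zero), one_smul, sub_self]

theorem two_mul_sum_norm_sub_mean_sq_le [Nonempty ι] (x : ι → E) {B : ℝ}
    (h : ∀ i j, ‖x i - x j‖ ≤ B) :
    2 * ∑ i, ‖x i - (Fintype.card ι : ℝ)⁻¹ • ∑ k, x k‖ ^ 2 ≤ (Fintype.card ι - 1) * B ^ 2 := by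
  have hn : (0 : ℝ) < Fintype.card ι := Nat.cast_pos.mpr Fintype.card_pos
  have hsum : ∑ i, ∑ j, ‖x i - x j‖ ^ 2 ≤ Fintype.card ι * ((Fintype.card ι - 1) * B ^ 2) := by
    simpa using sum_le_sum fun i (_ : i ∈ univ) => sum_norm_sub_sq_le_of_forall_le x h i
  rw [sum_sum_norm_sub_sq_eq x ((Fintype.card ι : ℝ)⁻¹ • ∑ k, x k), sum_sub_mean_eq_zero,
    norm_zero, zero_pow two_ne_zero, mul_zero, sub_zero, mul_assoc] at hsum
  exact le_of_mul_le_mul_left (by linarith) hn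

end Variance

theorem stmt_7_general (n d : ℕ) (G : SimpleGraph (Fin n))
    (x : Fin n → EuclideanSpace ℝ (Fin d)) (istar jstar : Fin n)
    (hmax : ∀ i j : Fin n, G.Adj i j → ‖x i - x j‖ ≤ ‖x istar - x jstar‖) :
    ‖x istar - x jstar‖ ^ 2 ≥
      2 / (((n : ℝ) - 1) * (G.diam : ℝ) ^ 2) *
        ∑ i, ‖x i - (n : ℝ)⁻¹ • ∑ k, x k‖ ^ 2 := by
  -- `G.diam = 0` also when `G` is disconnected; then the right-hand side is `2 / 0 * V = 0`.
  rcases eq_or_ne G.diam 0 with hD | hD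
  · simp [hD]
  have hnontriv := G.nontrivial_of_diam_ne_zero hD
  have hpair := G.norm_sub_le_diam_mul (G.ediam_ne_top_of_diam_ne_zero hD) (norm_nonneg _) hmax
  have hvar := two_mul_sum_norm_sub_mean_sq_le x hpair
  rw [Fintype.card_fin] at hvar
  have hpos : 0 < ((n : ℝ) - 1) * (G.diam : ℝ) ^ 2 := by
    have : (1 : ℝ) < n := by exact_mod_cast Fintype.card_fin n ▸ Fintype.one_lt_card
    have : (0 : ℝ) < G.diam := by exact_mod_cast Nat.pos_of_ne_zero hD
    positivity
  rw [ge_iff_le, div_mul_eq_mul_div, div_le_iff₀ hpos]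
  linarith [mul_pow (G.diam : ℝ) ‖x istar - x jstar‖ 2]

theorem stmt_7 (n d : ℕ) (hn : 2 ≤ n) (G : SimpleGraph (Fin n)) (hG : G.Connected)
    (x : Fin n → EuclideanSpace ℝ (Fin d)) (istar jstar : Fin n)
    (hadj : G.Adj istar jstar)
    (hmax : ∀ i j : Fin n, G.Adj i j → ‖x i - x j‖ ≤ ‖x istar - x jstar‖) :
    ‖x istar - x jstar‖ ^ 2 ≥
      2 / (((n : ℝ) - 1) * (G.diam : ℝ) ^ 2) *
        ∑ i, ‖x i - (n : ℝ)⁻¹ • ∑ k, x k‖ ^ 2 :=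
  stmt_7_general n d G x istar jstar hmax
end
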